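/- With Y = X^{(1)}C⁰^{(1)} + E and C̃ the thresholded version of Ĉ (keeping first s rows, zeroing the rest), the objective difference satisfies Q(Ĉ) − Q(C̃) ≥ ‖Ĉ^{(2)}‖·{(nλ^{(2)} − 2ξ^{(2)}) − 2σ_max(X^{(2)T}X^{(1)})·‖Ĉ^{(1)} − C⁰^{(1)}‖}, where ξ^{(2)} = max_{j>s}‖X_j^T E‖ and λ^{(2)} = min_{j>s} λ_j. -/
import Mathlib


open scoped BigOperators
open Matrix

/-- Frobenius norm of a real matrix. -/
noncomputable def frob {a b : ℕ} (M : Matrix (Fin a) (Fin b) ℝ) : ℝ :=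
  Real.sqrt (∑ i, ∑ j, (M i j) ^ 2)

/-- Euclidean norm of the `j`-th row of a matrix. -/
noncomputable def rnorm {a b : ℕ} (M : Matrix (Fin a) (Fin b) ℝ) (j : Fin a) : ℝ :=
  Real.sqrt (∑ k, (M j k) ^ 2)

/-- Operator (spectral) norm of a real matrix: the largest singular value. -/
noncomputable def opN {a b : ℕ} (M : Matrix (Fin a) (Fin b) ℝ) : ℝ :=
  sSup {c : ℝ | ∃ v : Fin b → ℝ, (∑ j, (v j) ^ 2) ≤ 1 ∧
    c = Real.sqrt (∑ i, (M.mulVec v i) ^ 2)}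

noncomputable def ipF {a b : ℕ} (M N : Matrix (Fin a) (Fin b) ℝ) : ℝ :=
  ∑ i, ∑ j, M i j * N i j

lemma my_abs_le {x y : ℝ} (hy : 0 ≤ y) (h : x ^ 2 ≤ y ^ 2) : |x| ≤ y := by
  nlinarith [abs_nonneg x, sq_abs x]

lemma frob_nonneg {a b : ℕ} (M : Matrix (Fin a) (Fin b) ℝ) : 0 ≤ frob M :=
  Real.sqrt_nonneg _

lemma rnorm_nonneg {a b : ℕ} (M : Matrix (Fin a) (Fin b) ℝ) (j : Fin a) : 0 ≤ rnorm M j :=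
  Real.sqrt_nonneg _

lemma frob_sq {a b : ℕ} (M : Matrix (Fin a) (Fin b) ℝ) :
    frob M ^ 2 = ∑ i, ∑ j, (M i j) ^ 2 :=
  Real.sq_sqrt (by positivity)

lemma rnorm_sq {a b : ℕ} (M : Matrix (Fin a) (Fin b) ℝ) (j : Fin a) :
    rnorm M j ^ 2 = ∑ k, (M j k) ^ 2 :=
  Real.sq_sqrt (by positivity)

/-- Cauchy–Schwarz for the Frobenius inner product. -/
lemma abs_ipF_le {a b : ℕ} (M N : Matrix (Fin a) (Fin b) ℝ) :
    |ipF M N| ≤ frob M * frob N := by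
  have h := Finset.sum_mul_sq_le_sq_mul_sq (Finset.univ : Finset (Fin a × Fin b))
    (fun x => M x.1 x.2) (fun x => N x.1 x.2)
  simp only [← Finset.univ_product_univ, Finset.sum_product] at h
  exact my_abs_le (mul_nonneg (frob_nonneg M) (frob_nonneg N))
    (by rw [mul_pow, frob_sq, frob_sq]; exact h)

/-- Cauchy–Schwarz per row. -/
lemma abs_row_le {a b : ℕ} (M N : Matrix (Fin a) (Fin b) ℝ) (j : Fin a) :
    |∑ k, M j k * N j k| ≤ rnorm M j * rnorm N j := by
  have h := Finset.sum_mul_sq_le_sq_mul_sq (Finset.univ : Finset (Fin b))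
    (fun k => M j k) (fun k => N j k)
  exact my_abs_le (mul_nonneg (rnorm_nonneg M j) (rnorm_nonneg N j))
    (by rw [mul_pow, rnorm_sq, rnorm_sq]; exact h)

lemma frob_le_sum_rnorm {a b : ℕ} (M : Matrix (Fin a) (Fin b) ℝ) :
    frob M ≤ ∑ j, rnorm M j := by
  have h : ∑ i, ∑ j, (M i j) ^ 2 ≤ (∑ j, rnorm M j) ^ 2 := by
    calc ∑ i, ∑ j, (M i j) ^ 2 = ∑ i, (rnorm M i) ^ 2 := by
          simp [rnorm_sq]
      _ ≤ (∑ j, rnorm M j) ^ 2 :=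
          Finset.sum_sq_le_sq_sum_of_nonneg (fun i _ => rnorm_nonneg M i)
  calc frob M ≤ Real.sqrt ((∑ j, rnorm M j) ^ 2) := Real.sqrt_le_sqrt h
    _ = ∑ j, rnorm M j := Real.sqrt_sq (Finset.sum_nonneg fun j _ => rnorm_nonneg M j)

lemma mem_opN_set {a b : ℕ} (M : Matrix (Fin a) (Fin b) ℝ) {c : ℝ}
    (hc : ∃ v : Fin b → ℝ, (∑ j, (v j) ^ 2) ≤ 1 ∧
      c = Real.sqrt (∑ i, (M.mulVec v i) ^ 2)) : c ≤ opN M := by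
  unfold opN
  refine le_csSup ?_ hc
  refine ⟨frob M, ?_⟩
  rintro x ⟨v, hv, rfl⟩
  have hbd : ∀ i, (M.mulVec v i) ^ 2 ≤ ∑ j, (M i j) ^ 2 := by
    intro i
    have h := Finset.sum_mul_sq_le_sq_mul_sq (Finset.univ : Finset (Fin b))
      (fun j => M i j) v
    calc (M.mulVec v i) ^ 2 = (∑ j, M i j * v j) ^ 2 := by
          simp [Matrix.mulVec, dotProduct]
      _ ≤ (∑ j, (M i j) ^ 2) * (∑ j, (v j) ^ 2) := h
      _ ≤ (∑ j, (M i j) ^ 2) * 1 := by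
          apply mul_le_mul_of_nonneg_left hv (by positivity)
      _ = ∑ j, (M i j) ^ 2 := mul_one _
  exact Real.sqrt_le_sqrt (Finset.sum_le_sum fun i _ => hbd i)

lemma opN_nonneg {a b : ℕ} (M : Matrix (Fin a) (Fin b) ℝ) : 0 ≤ opN M := by
  apply mem_opN_set M
  exact ⟨0, by simp, by simp [Matrix.mulVec, dotProduct]⟩

lemma mulVec_norm_le {a b : ℕ} (M : Matrix (Fin a) (Fin b) ℝ) (v : Fin b → ℝ) :
    Real.sqrt (∑ i, (M.mulVec v i) ^ 2) ≤ opN M * Real.sqrt (∑ j, (v j) ^ 2) := by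
  rcases eq_or_lt_of_le (show (0:ℝ) ≤ ∑ j, (v j) ^ 2 by positivity) with h0 | h0
  · have hv : v = 0 := by
      funext j
      have h1 : (v j) ^ 2 = 0 := by
        have := Finset.sum_eq_zero_iff_of_nonneg
          (fun j (_ : j ∈ Finset.univ) => sq_nonneg (v j)) |>.mp h0.symm
        exact this j (Finset.mem_univ j)
      show v j = 0
      exact pow_eq_zero_iff (by norm_num) |>.mp h1
    subst hv
    simp [Matrix.mulVec, dotProduct]
  · set t := Real.sqrt (∑ j, (v j) ^ 2) with ht
    have htpos : 0 < t := Real.sqrt_pos.mpr h0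
    have ht2 : t ^ 2 = ∑ j, (v j) ^ 2 := Real.sq_sqrt (by positivity)
    set u : Fin b → ℝ := fun j => v j / t with hu
    have hmv : ∀ i, M.mulVec u i = M.mulVec v i / t := by
      intro i
      simp only [Matrix.mulVec, dotProduct, hu, ← mul_div_assoc]
      rw [← Finset.sum_div]
    have hsum : ∑ j, (u j) ^ 2 = 1 := by
      simp only [hu, div_pow, ← Finset.sum_div]
      rw [← ht2]; field_simp
    have hle : Real.sqrt (∑ i, (M.mulVec u i) ^ 2) ≤ opN M :=
      mem_opN_set M ⟨u, le_of_eq hsum, rfl⟩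
    have heq : Real.sqrt (∑ i, (M.mulVec u i) ^ 2) =
        Real.sqrt (∑ i, (M.mulVec v i) ^ 2) / t := by
      simp only [hmv, div_pow, ← Finset.sum_div]
      rw [Real.sqrt_div (by positivity), Real.sqrt_sq htpos.le]
    rw [heq] at hle
    exact (div_le_iff₀ htpos).mp hle

lemma frob_mul_le {a b c : ℕ} (M : Matrix (Fin a) (Fin b) ℝ)
    (D : Matrix (Fin b) (Fin c) ℝ) : frob (M * D) ≤ opN M * frob D := by
  have key : ∀ k : Fin c, ∑ i, ((M * D) i k) ^ 2 ≤ opN M ^ 2 * ∑ j, (D j k) ^ 2 := by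
    intro k
    have h := mulVec_norm_le M (
      fun j => D j k)
    have h1 : ∑ i, ((M * D) i k) ^ 2 = ∑ i, (M.mulVec (fun j => D j k) i) ^ 2 := by
      simp [Matrix.mul_apply, Matrix.mulVec, dotProduct]
    have h2 := pow_le_pow_left₀ (Real.sqrt_nonneg _) h 2
    rw [Real.sq_sqrt (by positivity), mul_pow, Real.sq_sqrt (by positivity)] at h2
    rw [h1]; exact h2
  have h3 : ∑ i, ∑ k, ((M * D) i k) ^ 2 ≤ opN M ^ 2 * (∑ j, ∑ k, (D j k) ^ 2) := by
    rw [Finset.sum_comm]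
    calc ∑ k, ∑ i, ((M * D) i k) ^ 2 ≤ ∑ k, opN M ^ 2 * ∑ j, (D j k) ^ 2 :=
          Finset.sum_le_sum (fun k _ => key k)
      _ = opN M ^ 2 * ∑ k, ∑ j, (D j k) ^ 2 := (Finset.mul_sum _ _ _).symm
      _ = opN M ^ 2 * ∑ j, ∑ k, (D j k) ^ 2 := by rw [Finset.sum_comm]
  calc frob (M * D) ≤ Real.sqrt (opN M ^ 2 * (∑ j, ∑ k, (D j k) ^ 2)) :=
        Real.sqrt_le_sqrt h3
    _ = opN M * frob D := by
        rw [Real.sqrt_mul (by positivity), Real.sqrt_sq (opN_nonneg M)]; rfl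

lemma ipF_mul_left {a b c : ℕ} (P : Matrix (Fin a) (Fin c) ℝ)
    (M : Matrix (Fin a) (Fin b) ℝ) (N : Matrix (Fin b) (Fin c) ℝ) :
    ipF P (M * N) = ipF (Mᵀ * P) N := by
  simp only [ipF, Matrix.mul_apply, Matrix.transpose_apply, Finset.mul_sum, Finset.sum_mul]
  rw [Finset.sum_comm]
  conv_rhs => rw [Finset.sum_comm]
  apply Finset.sum_congr rfl; intro k _
  rw [Finset.sum_comm]
  apply Finset.sum_congr rfl; intro j _
  apply Finset.sum_congr rfl; intro i _
  ring

lemma ipF_sub_left {a b : ℕ} (M N P : Matrix (Fin a) (Fin b) ℝ) :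
    ipF (M - N) P = ipF M P - ipF N P := by
  simp [ipF, Matrix.sub_apply, sub_mul, Finset.sum_sub_distrib]

set_option maxHeartbeats 2000000 in
theorem stmt10 {n p q s : ℕ} (hs : s ≤ p)
    (X : Matrix (Fin n) (Fin p) ℝ) (E Y : Matrix (Fin n) (Fin q) ℝ)
    (C01 : Matrix (Fin s) (Fin q) ℝ)
    (Chat Ctil : Matrix (Fin p) (Fin q) ℝ)
    (lam : Fin p → ℝ) (hlam : ∀ j, 0 ≤ lam j)
    (hY : Y = X.submatrix id (Fin.castLE hs) * C01 + E)
    (hCtil : ∀ (i : Fin p) (k : Fin q),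
      Ctil i k = if (i : ℕ) < s then Chat i k else 0)
    (ξ2 lam2 : ℝ)
    (hξ2 : IsGreatest {x : ℝ | ∃ j : Fin p, s ≤ (j : ℕ) ∧ x = rnorm (Xᵀ * E) j} ξ2)
    (hlam2 : IsLeast {x : ℝ | ∃ j : Fin p, s ≤ (j : ℕ) ∧ x = lam j} lam2)
    (hbig : 2 * ξ2 ≤ n * lam2) :
    (frob (Y - X * Chat) ^ 2 + n * ∑ j, lam j * rnorm Chat j) -
      (frob (Y - X * Ctil) ^ 2 + n * ∑ j, lam j * rnorm Ctil j) ≥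
    frob (Chat.submatrix
        (fun i : Fin (p - s) => (⟨s + (i : ℕ), by omega⟩ : Fin p)) id) *
      ((n * lam2 - 2 * ξ2) -
        2 * opN ((X.submatrix id
            (fun i : Fin (p - s) => (⟨s + (i : ℕ), by omega⟩ : Fin p)))ᵀ *
            X.submatrix id (Fin.castLE hs)) *
          frob (Chat.submatrix (Fin.castLE hs) id - C01)) := by
  have hpm : ∀ i : Fin (p - s), s + (i : ℕ) < p := fun i => by omega
  set e2 : Fin (p - s) → Fin p := fun i => ⟨s + (i : ℕ), hpm i⟩ with he2
  set X1 := X.submatrix id (Fin.castLE hs) with hX1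
  set X2 := X.submatrix id e2 with hX2
  set C2 := Chat.submatrix e2 id with hC2
  set Δ := Chat.submatrix (Fin.castLE hs) id - C01 with hΔ
  -- splitting sums over Fin p
  have hps : s + (p - s) = p := by omega
  have hsplit : ∀ f : Fin p → ℝ, ∑ j, f j =
      (∑ i : Fin s, f (Fin.castLE hs i)) + ∑ i : Fin (p - s), f (e2 i) := by
    intro f
    set eE : (Fin s ⊕ Fin (p - s)) ≃ Fin p := finSumFinEquiv.trans (finCongr hps) with heE
    calc ∑ j, f j = ∑ x : Fin s ⊕ Fin (p - s), f (eE x) := (Equiv.sum_comp eE f).symm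
      _ = (∑ i : Fin s, f (eE (Sum.inl i))) + ∑ i : Fin (p - s), f (eE (Sum.inr i)) :=
          Fintype.sum_sum_type _
      _ = _ := by
          congr 1
  -- matrix identities
  have hAmat : ∀ i k, (X * Chat) i k - (X * Ctil) i k = (X2 * C2) i k := by
    intro i k
    rw [Matrix.mul_apply, Matrix.mul_apply, Matrix.mul_apply, ← Finset.sum_sub_distrib]
    rw [hsplit (fun j => X i j * Chat j k - X i j * Ctil j k)]
    have h1 : ∀ j : Fin s,
        X i (Fin.castLE hs j) * Chat (Fin.castLE hs j) k
          - X i (Fin.castLE hs j) * Ctil (Fin.castLE hs j) k = 0 := by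
      intro j; rw [hCtil, if_pos (by simp [j.isLt])]; ring
    have h2 : ∀ j : Fin (p - s),
        X i (e2 j) * Chat (e2 j) k - X i (e2 j) * Ctil (e2 j) k
          = X2 i j * C2 j k := by
      intro j; rw [hCtil, if_neg (by simp [he2])]
      simp [hX2, hC2]
    rw [Finset.sum_congr rfl (fun j _ => h1 j), Finset.sum_congr rfl (fun j _ => h2 j)]
    simp
  have hDmat : Y - X * Ctil = E - X1 * Δ := by
    ext i k
    simp only [Matrix.sub_apply, hY, Matrix.add_apply, Matrix.mul_apply]
    rw [hsplit (fun j => X i j * Ctil j k)]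
    have h1 : ∀ j : Fin s,
        X i (Fin.castLE hs j) * Ctil (Fin.castLE hs j) k
          = X1 i j * Chat (Fin.castLE hs j) k := by
      intro j; rw [hCtil, if_pos (by simp [j.isLt])]; simp [hX1]
    have h2 : ∀ j : Fin (p - s), X i (e2 j) * Ctil (e2 j) k = 0 := by
      intro j; rw [hCtil, if_neg (by simp [he2])]; ring
    rw [Finset.sum_congr rfl (fun j _ => h1 j), Finset.sum_congr rfl (fun j _ => h2 j)]
    have h3 : ∀ j : Fin s, X1 i j * Δ j k
        = X1 i j * Chat (Fin.castLE hs j) k - X1 i j * C01 j k := by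
      intro j; simp [hΔ, hX1, mul_sub]
    rw [Finset.sum_congr rfl (fun j _ => h3 j), Finset.sum_sub_distrib]
    have h4 : ∀ j : Fin s, X1 i j * C01 j k = X i (Fin.castLE hs j) * C01 j k := by
      intro j; simp [hX1]
    rw [Finset.sum_congr rfl (fun j _ => h4 j)]
    simp only [Finset.sum_const_zero]
    ring
  -- loss difference
  have hloss : frob (Y - X * Chat) ^ 2 - frob (Y - X * Ctil) ^ 2
      = frob (X2 * C2) ^ 2 - 2 * ipF (Y - X * Ctil) (X2 * C2) := by
    have hL : frob (Y - X * Chat) ^ 2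
        = ∑ i, ∑ k, ((Y - X * Ctil) i k - (X2 * C2) i k) ^ 2 := by
      rw [frob_sq]
      refine Finset.sum_congr rfl fun i _ => Finset.sum_congr rfl fun k _ => ?_
      congr 1
      have h := hAmat i k
      simp only [Matrix.sub_apply] at *
      linarith
    rw [hL, frob_sq, frob_sq]
    simp only [ipF]
    rw [Finset.mul_sum, ← Finset.sum_sub_distrib, ← Finset.sum_sub_distrib]
    refine Finset.sum_congr rfl fun i _ => ?_
    rw [Finset.mul_sum, ← Finset.sum_sub_distrib, ← Finset.sum_sub_distrib]
    exact Finset.sum_congr rfl fun k _ => by ring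
  -- penalty difference
  have hhead : ∀ i : Fin s, rnorm Ctil (Fin.castLE hs i) = rnorm Chat (Fin.castLE hs i) := by
    intro i; unfold rnorm; congr 1
    exact Finset.sum_congr rfl fun k _ => by rw [hCtil, if_pos (by simp [i.isLt])]
  have htail : ∀ i : Fin (p - s), rnorm Ctil (e2 i) = 0 := by
    intro i; unfold rnorm
    rw [Finset.sum_eq_zero (fun k _ => by rw [hCtil, if_neg (by simp [he2])]; ring)]
    exact Real.sqrt_zero
  have hrowC2 : ∀ i : Fin (p - s), rnorm Chat (e2 i) = rnorm C2 i := fun i => rfl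
  have hpen : (∑ j, lam j * rnorm Chat j) - (∑ j, lam j * rnorm Ctil j)
      = ∑ i : Fin (p - s), lam (e2 i) * rnorm C2 i := by
    rw [hsplit (fun j => lam j * rnorm Chat j), hsplit (fun j => lam j * rnorm Ctil j)]
    rw [Finset.sum_congr rfl (fun i _ => by rw [hhead i] :
      ∀ i ∈ Finset.univ, lam (Fin.castLE hs i) * rnorm Ctil (Fin.castLE hs i)
        = lam (Fin.castLE hs i) * rnorm Chat (Fin.castLE hs i))]
    rw [Finset.sum_congr rfl (fun i _ => by rw [htail i, mul_zero] :
      ∀ i ∈ Finset.univ, lam (e2 i) * rnorm Ctil (e2 i) = 0)]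
    rw [Finset.sum_congr rfl (fun i _ => by rw [hrowC2 i] :
      ∀ i ∈ Finset.univ, lam (e2 i) * rnorm Chat (e2 i) = lam (e2 i) * rnorm C2 i)]
    simp only [Finset.sum_const_zero]
    ring
  -- bounds
  have hX2TE : X2ᵀ * E = (Xᵀ * E).submatrix e2 id := by
    ext i k
    simp [Matrix.mul_apply, Matrix.transpose_apply, hX2]
  have hxi_bound : ∀ i : Fin (p - s), rnorm (X2ᵀ * E) i ≤ ξ2 := by
    intro i
    rw [hX2TE]
    exact hξ2.2 ⟨e2 i, by simp [he2], rfl⟩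
  have hb1 : |ipF E (X2 * C2)| ≤ ξ2 * ∑ i, rnorm C2 i := by
    rw [ipF_mul_left]
    calc |ipF (X2ᵀ * E) C2| = |∑ i, ∑ k, (X2ᵀ * E) i k * C2 i k| := rfl
      _ ≤ ∑ i, |∑ k, (X2ᵀ * E) i k * C2 i k| := Finset.abs_sum_le_sum_abs _ _
      _ ≤ ∑ i, rnorm (X2ᵀ * E) i * rnorm C2 i :=
          Finset.sum_le_sum fun i _ => abs_row_le _ _ i
      _ ≤ ∑ i, ξ2 * rnorm C2 i := Finset.sum_le_sum fun i _ =>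
          mul_le_mul_of_nonneg_right (hxi_bound i) (rnorm_nonneg _ _)
      _ = ξ2 * ∑ i, rnorm C2 i := (Finset.mul_sum _ _ _).symm
  have hb2 : |ipF (X1 * Δ) (X2 * C2)| ≤ opN (X2ᵀ * X1) * frob Δ * frob C2 := by
    rw [ipF_mul_left, ← Matrix.mul_assoc]
    calc |ipF (X2ᵀ * X1 * Δ) C2| ≤ frob (X2ᵀ * X1 * Δ) * frob C2 := abs_ipF_le _ _
      _ ≤ (opN (X2ᵀ * X1) * frob Δ) * frob C2 :=
          mul_le_mul_of_nonneg_right (frob_mul_le _ _) (frob_nonneg _)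
      _ = _ := by ring
  have hDsub : ipF (Y - X * Ctil) (X2 * C2)
      = ipF E (X2 * C2) - ipF (X1 * Δ) (X2 * C2) := by
    rw [hDmat, ipF_sub_left]
  have hpen2 : lam2 * (∑ i, rnorm C2 i) ≤ ∑ i : Fin (p - s), lam (e2 i) * rnorm C2 i := by
    rw [Finset.mul_sum]
    exact Finset.sum_le_sum fun i _ =>
      mul_le_mul_of_nonneg_right (hlam2.2 ⟨e2 i, by simp [he2], rfl⟩) (rnorm_nonneg _ _)
  -- assembly
  have hmain : (frob (Y - X * Chat) ^ 2 + n * ∑ j, lam j * rnorm Chat j) -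
      (frob (Y - X * Ctil) ^ 2 + n * ∑ j, lam j * rnorm Ctil j)
      = frob (X2 * C2) ^ 2 - 2 * ipF E (X2 * C2) + 2 * ipF (X1 * Δ) (X2 * C2)
        + n * ∑ i : Fin (p - s), lam (e2 i) * rnorm C2 i := by
    have h1 : (frob (Y - X * Chat) ^ 2 + n * ∑ j, lam j * rnorm Chat j) -
        (frob (Y - X * Ctil) ^ 2 + n * ∑ j, lam j * rnorm Ctil j)
        = (frob (Y - X * Chat) ^ 2 - frob (Y - X * Ctil) ^ 2)
          + n * ((∑ j, lam j * rnorm Chat j) - (∑ j, lam j * rnorm Ctil j)) := by ring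
    rw [h1, hloss, hpen, hDsub]; ring
  rw [ge_iff_le, ← sub_nonneg]
  rw [hmain]
  have hS : frob C2 ≤ ∑ i, rnorm C2 i := frob_le_sum_rnorm C2
  have hF : 0 ≤ frob C2 := frob_nonneg C2
  have hsq : 0 ≤ frob (X2 * C2) ^ 2 := sq_nonneg _
  have hKn : 0 ≤ opN (X2ᵀ * X1) := opN_nonneg _
  have hDn : 0 ≤ frob Δ := frob_nonneg Δ
  have ha : ipF E (X2 * C2) ≤ ξ2 * ∑ i, rnorm C2 i := le_of_abs_le hb1
  have hbb : -(opN (X2ᵀ * X1) * frob Δ * frob C2) ≤ ipF (X1 * Δ) (X2 * C2) :=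
    (abs_le.mp hb2).1
  have hnn : (0:ℝ) ≤ (n:ℝ) := Nat.cast_nonneg n
  have hprod : 0 ≤ ((n:ℝ) * lam2 - 2 * ξ2) * ((∑ i, rnorm C2 i) - frob C2) :=
    mul_nonneg (by linarith) (by linarith)
  have hpen3 : (n:ℝ) * (lam2 * ∑ i, rnorm C2 i)
      ≤ (n:ℝ) * ∑ i : Fin (p - s), lam (e2 i) * rnorm C2 i :=
    mul_le_mul_of_nonneg_left hpen2 hnn
  nlinarith [hprod, hpen3, ha, hbb, hsq]
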